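/- Let Ĉ be PSD with localization states M̂_k = max_{i,j}|Ĉ_{i,j}| λ_A^{−(𝐝(i,j)∧k)} (0 < λ_A < 1), σ_o > 0, and observations at sparse locations {o_1,…,o_q} with 𝐝(o_i,o_j) > 2l for i ≠ j, so each index i has at most one observed location o(i) within distance l. Define the localized-Kalman-update posterior covariance C with entries given (for unobservable corrections removed) by C_{i,j} = Ĉ_{i,j} − Ĉ_{i,o(i)}Ĉ_{j,o(i)}/(σ_o²+Ĉ_{o(i),o(i)}) − Ĉ_{i,o(j)}Ĉ_{j,o(j)}/(σ_o²+Ĉ_{o(j),o(j)}) + Ĉ_{i,o(i)}Ĉ_{j,o(j)}Ĉ_{o(i),o(j)}/((σ_o²+Ĉ_{o(i),o(i)})(σ_o²+Ĉ_{o(j),o(j)})) + σ_o² Ĉ_{i,o(i)}Ĉ_{j,o(i)}/(σ_o²+Ĉ_{o(i),o(i)})² · 1_{o(i)=o(j)}. Then the posterior localization states satisfy M_k ≤ φ(M̂_k) with φ(M) = M(1 + σ_o^{-2} M)² + σ_o^{-2} M². -/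

import Mathlib

/-!
The weight `λ^{-(𝐝(i,j) ∧ k)}` is submultiplicative along the triangle inequality, because
`t ↦ t ∧ k` is subadditive on nonnegative reals and `λ < 1`. Hence a product of entries of `Ĉ`
along a path `i → o → j` (or `i → o₁ → o₂ → j`), weighted by the weight of `(i, j)`, is at most
`M̂_k²` (or `M̂_k³`). Every denominator `σ_o² + Ĉ_{o,o}` is at least `σ_o²`, so the five terms of
`C_{i,j}` contribute at most `M̂ + 3 σ_o⁻² M̂² + σ_o⁻⁴ M̂³ = φ(M̂)`.
-/

open Matrix BigOperators Real

/-- The localization state of a covariance matrix at radius k. -/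
noncomputable def locState {d : ℕ} (C : Matrix (Fin d) (Fin d) ℝ)
    (dd : Fin d → Fin d → ℝ) (lam : ℝ) (k : ℕ) : ℝ :=
  ⨆ i : Fin d, ⨆ j : Fin d, |C i j| * lam ^ (-(min (dd i j) (k : ℝ)))

theorem nonneg_of_dist_self_of_symm_of_triangle {α : Type*} {dd : α → α → ℝ}
    (hdd_self : ∀ i, dd i i = 0) (hdd_symm : ∀ i j, dd i j = dd j i)
    (hdd_tri : ∀ i j k, dd i k ≤ dd i j + dd j k) (i j : α) : 0 ≤ dd i j := by
  have := hdd_tri i j i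
  rw [hdd_self, hdd_symm j i] at this
  linarith

theorem min_add_le_min_add_min {a b c : ℝ} (ha : 0 ≤ a) (hb : 0 ≤ b) (hc : 0 ≤ c) :
    min (a + b) c ≤ min a c + min b c := by
  rcases le_total a c with hac | hca <;> rcases le_total b c with hbc | hcb <;>
    simp only [min_eq_left, min_eq_right, *] <;>
    linarith [min_le_left (a + b) c, min_le_right (a + b) c]

theorem abs_sub_sub_add_add_mul_le {a b c e f w A B E : ℝ} (hw : 0 ≤ w)
    (ha : |a| * w ≤ A) (hb : |b| * w ≤ B) (hc : |c| * w ≤ B) (he : |e| * w ≤ E)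
    (hf : |f| * w ≤ B) : |a - b - c + e + f| * w ≤ A + 3 * B + E := by
  have htri : |a - b - c + e + f| ≤ |a| + |b| + |c| + |e| + |f| := by
    linarith [abs_add_le (a - b - c + e) f, abs_add_le (a - b - c) e, abs_sub (a - b) c,
      abs_sub a b]
  nlinarith [mul_le_mul_of_nonneg_right htri hw]

theorem abs_mul_mul_le_of_le {p r w P x : ℝ} (hr : 0 ≤ r) (hrx : r ≤ x) (hw : 0 ≤ w)
    (hp : |p| * w ≤ P) : |p * r| * w ≤ x * P := by
  have hP : 0 ≤ P := (mul_nonneg (abs_nonneg p) hw).trans hp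
  calc |p * r| * w = (|p| * w) * r := by rw [abs_mul, abs_of_nonneg hr]; ring
    _ ≤ P * x := mul_le_mul hp hrx hr hP
    _ = x * P := mul_comm P x

section Denominators

variable {σ c c' : ℝ}

theorem inv_sq_add_le (hσ : σ ≠ 0) (hc : 0 ≤ c) : (σ ^ 2 + c)⁻¹ ≤ σ⁻¹ ^ 2 := by
  rw [inv_pow]
  exact inv_anti₀ (by positivity) (le_add_of_nonneg_right hc)

theorem inv_sq_add_mul_sq_add_le (hσ : σ ≠ 0) (hc : 0 ≤ c) (hc' : 0 ≤ c') :
    ((σ ^ 2 + c) * (σ ^ 2 + c'))⁻¹ ≤ (σ⁻¹ ^ 2) ^ 2 := by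
  rw [mul_inv, sq (σ⁻¹ ^ 2)]
  exact mul_le_mul (inv_sq_add_le hσ hc) (inv_sq_add_le hσ hc') (by positivity) (by positivity)

theorem sq_div_sq_add_sq_le (hσ : σ ≠ 0) (hc : 0 ≤ c) : σ ^ 2 / (σ ^ 2 + c) ^ 2 ≤ σ⁻¹ ^ 2 := by
  have hσ2 : 0 < σ ^ 2 := by positivity
  rw [div_le_iff₀ (by positivity), inv_pow, inv_mul_eq_div, le_div_iff₀ hσ2]
  nlinarith

end Denominators

structure IsSymmSubmulWeight {ι : Type*} (w : ι → ι → ℝ) : Prop where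
  nonneg : ∀ a b, 0 ≤ w a b
  comm : ∀ a b, w a b = w b a
  le_mul : ∀ a m b, w a b ≤ w a m * w m b

section WeightedBound

variable {ι : Type*} {C w : ι → ι → ℝ} {M σ : ℝ}

theorem abs_mul_mul_le_sq (hw : IsSymmSubmulWeight w) (hC : ∀ a b, |C a b| * w a b ≤ M)
    (i o j : ι) : |C i o * C j o| * w i j ≤ M ^ 2 := by
  have hM : 0 ≤ M := (mul_nonneg (abs_nonneg _) (hw.nonneg i i)).trans (hC i i)
  calc |C i o * C j o| * w i j ≤ |C i o| * |C j o| * (w i o * w o j) := by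
        rw [abs_mul]; exact mul_le_mul_of_nonneg_left (hw.le_mul i o j) (by positivity)
    _ = (|C i o| * w i o) * (|C j o| * w j o) := by rw [hw.comm o j]; ring
    _ ≤ M * M := mul_le_mul (hC i o) (hC j o) (mul_nonneg (abs_nonneg _) (hw.nonneg j o)) hM
    _ = M ^ 2 := (sq M).symm

theorem abs_mul_mul_mul_le_cube (hw : IsSymmSubmulWeight w) (hC : ∀ a b, |C a b| * w a b ≤ M)
    (i o₁ o₂ j : ι) : |C i o₁ * C j o₂ * C o₁ o₂| * w i j ≤ M ^ 3 := by
  have hM : 0 ≤ M := (mul_nonneg (abs_nonneg _) (hw.nonneg i i)).trans (hC i i)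
  have hCw : ∀ a b, 0 ≤ |C a b| * w a b := fun a b => mul_nonneg (abs_nonneg _) (hw.nonneg a b)
  have hpath : w i j ≤ w i o₁ * (w o₁ o₂ * w o₂ j) :=
    (hw.le_mul i o₁ j).trans (mul_le_mul_of_nonneg_left (hw.le_mul o₁ o₂ j) (hw.nonneg i o₁))
  calc |C i o₁ * C j o₂ * C o₁ o₂| * w i j
        ≤ |C i o₁| * |C j o₂| * |C o₁ o₂| * (w i o₁ * (w o₁ o₂ * w o₂ j)) := by
        rw [abs_mul, abs_mul]; exact mul_le_mul_of_nonneg_left hpath (by positivity)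
    _ = (|C i o₁| * w i o₁) * ((|C o₁ o₂| * w o₁ o₂) * (|C j o₂| * w j o₂)) := by
        rw [hw.comm o₂ j]; ring
    _ ≤ M * (M * M) := mul_le_mul (hC i o₁)
        (mul_le_mul (hC o₁ o₂) (hC j o₂) (hCw j o₂) hM) (mul_nonneg (hCw o₁ o₂) (hCw j o₂)) hM
    _ = M ^ 3 := by ring

theorem abs_gain_mul_le (hw : IsSymmSubmulWeight w) (hC : ∀ a b, |C a b| * w a b ≤ M)
    (hσ : σ ≠ 0) {o : ι} (ho : 0 ≤ C o o) (i j : ι) :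
    |C i o * C j o / (σ ^ 2 + C o o)| * w i j ≤ σ⁻¹ ^ 2 * M ^ 2 := by
  rw [div_eq_mul_inv]
  exact abs_mul_mul_le_of_le (inv_nonneg.mpr (by positivity)) (inv_sq_add_le hσ ho)
    (hw.nonneg i j) (abs_mul_mul_le_sq hw hC i o j)

theorem abs_cross_mul_le (hw : IsSymmSubmulWeight w) (hC : ∀ a b, |C a b| * w a b ≤ M)
    (hσ : σ ≠ 0) {o₁ o₂ : ι} (ho₁ : 0 ≤ C o₁ o₁) (ho₂ : 0 ≤ C o₂ o₂) (i j : ι) :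
    |C i o₁ * C j o₂ * C o₁ o₂ / ((σ ^ 2 + C o₁ o₁) * (σ ^ 2 + C o₂ o₂))| * w i j ≤
      (σ⁻¹ ^ 2) ^ 2 * M ^ 3 := by
  rw [div_eq_mul_inv]
  exact abs_mul_mul_le_of_le (inv_nonneg.mpr (by positivity))
    (inv_sq_add_mul_sq_add_le hσ ho₁ ho₂) (hw.nonneg i j) (abs_mul_mul_mul_le_cube hw hC i o₁ o₂ j)

theorem abs_correction_mul_le (hw : IsSymmSubmulWeight w) (hC : ∀ a b, |C a b| * w a b ≤ M)
    (hσ : σ ≠ 0) {o : ι} (ho : 0 ≤ C o o) (i j : ι) :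
    |σ ^ 2 * C i o * C j o / (σ ^ 2 + C o o) ^ 2| * w i j ≤ σ⁻¹ ^ 2 * M ^ 2 := by
  rw [show σ ^ 2 * C i o * C j o / (σ ^ 2 + C o o) ^ 2 =
    C i o * C j o * (σ ^ 2 / (σ ^ 2 + C o o) ^ 2) by ring]
  exact abs_mul_mul_le_of_le (by positivity) (sq_div_sq_add_sq_le hσ ho) (hw.nonneg i j)
    (abs_mul_mul_le_sq hw hC i o j)

end WeightedBound

noncomputable def locWeight {d : ℕ} (dd : Fin d → Fin d → ℝ) (lam : ℝ) (k : ℕ) (i j : Fin d) :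
    ℝ :=
  lam ^ (-(min (dd i j) (k : ℝ)))

section LocState

variable {d : ℕ} {C : Matrix (Fin d) (Fin d) ℝ} {dd : Fin d → Fin d → ℝ} {lam : ℝ} {k : ℕ}

theorem isSymmSubmulWeight_locWeight (hlam : 0 < lam) (hlam1 : lam ≤ 1)
    (hdd_nonneg : ∀ i j, 0 ≤ dd i j) (hdd_symm : ∀ i j, dd i j = dd j i)
    (hdd_tri : ∀ i j k, dd i k ≤ dd i j + dd j k) : IsSymmSubmulWeight (locWeight dd lam k) where
  nonneg i j := (rpow_pos_of_pos hlam _).le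
  comm i j := by rw [locWeight, hdd_symm]; rfl
  le_mul i m j := by
    rw [locWeight, locWeight, locWeight, ← rpow_add hlam]
    refine rpow_le_rpow_of_exponent_ge hlam hlam1 ?_
    have := (min_le_min_right (k : ℝ) (hdd_tri i m j)).trans
      (min_add_le_min_add_min (hdd_nonneg i m) (hdd_nonneg m j) k.cast_nonneg)
    linarith

theorem abs_mul_locWeight_le_locState (i j : Fin d) :
    |C i j| * locWeight dd lam k i j ≤ locState C dd lam k :=
  le_ciSup₂ (f := fun i j => |C i j| * locWeight dd lam k i j) (Set.finite_iUnion fun _ =>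
    Set.finite_range _).bddAbove i j

theorem locState_nonneg (hlam : 0 < lam) : 0 ≤ locState C dd lam k :=
  Real.iSup_nonneg fun _ => Real.iSup_nonneg fun _ =>
    mul_nonneg (abs_nonneg _) (rpow_pos_of_pos hlam _).le

theorem locState_le {B : ℝ} (hB : 0 ≤ B) (h : ∀ i j, |C i j| * locWeight dd lam k i j ≤ B) :
    locState C dd lam k ≤ B :=
  Real.iSup_le (fun i => Real.iSup_le (h i) hB) hB

end LocState

theorem analysis_step_localization {d : ℕ}
    (dd : Fin d → Fin d → ℝ)
    (hdd_self : ∀ i j, dd i j = 0 ↔ i = j)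
    (hdd_symm : ∀ i j, dd i j = dd j i)
    (hdd_tri : ∀ i j k, dd i k ≤ dd i j + dd j k)
    (lam : ℝ) (hlam : 0 < lam) (hlam1 : lam < 1)
    (σo : ℝ) (hσ : 0 < σo)
    (Chat : Matrix (Fin d) (Fin d) ℝ) (hChat : Chat.PosSemidef)
    (oi : Fin d → Option (Fin d))
    (C : Matrix (Fin d) (Fin d) ℝ)
    (hCpost : ∀ i j, C i j =
      Chat i j
      - (match oi i with
         | some o => Chat i o * Chat j o / (σo ^ 2 + Chat o o)
         | none => 0)
      - (match oi j with
         | some o => Chat i o * Chat j o / (σo ^ 2 + Chat o o)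
         | none => 0)
      + (match oi i, oi j with
         | some o1, some o2 =>
             Chat i o1 * Chat j o2 * Chat o1 o2 /
               ((σo ^ 2 + Chat o1 o1) * (σo ^ 2 + Chat o2 o2))
         | _, _ => 0)
      + (match oi i, oi j with
         | some o1, some o2 =>
             if o1 = o2 then
               σo ^ 2 * Chat i o1 * Chat j o1 / (σo ^ 2 + Chat o1 o1) ^ 2
             else 0
         | _, _ => 0)) :
    ∀ k : ℕ, locState C dd lam k ≤
      locState Chat dd lam k * (1 + σo⁻¹ ^ 2 * locState Chat dd lam k) ^ 2 +
        σo⁻¹ ^ 2 * locState Chat dd lam k ^ 2 := by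
  intro k
  have hdd_nonneg := nonneg_of_dist_self_of_symm_of_triangle (fun i => (hdd_self i i).mpr rfl)
    hdd_symm hdd_tri
  have hw := isSymmSubmulWeight_locWeight (k := k) hlam hlam1.le hdd_nonneg hdd_symm hdd_tri
  set M := locState Chat dd lam k
  have hC : ∀ a b, |Chat a b| * locWeight dd lam k a b ≤ M := abs_mul_locWeight_le_locState
  have hM : 0 ≤ M := locState_nonneg hlam
  have hdiag : ∀ o, 0 ≤ Chat o o := fun _ => hChat.diag_nonneg
  rw [show ∀ M x : ℝ, M * (1 + x * M) ^ 2 + x * M ^ 2 = M + 3 * (x * M ^ 2) + x ^ 2 * M ^ 3 from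
    fun M x => by ring]
  refine locState_le (by positivity) fun i j => ?_
  have hzero₂ : |(0 : ℝ)| * locWeight dd lam k i j ≤ σo⁻¹ ^ 2 * M ^ 2 := by
    rw [abs_zero, zero_mul]; positivity
  have hzero₃ : |(0 : ℝ)| * locWeight dd lam k i j ≤ (σo⁻¹ ^ 2) ^ 2 * M ^ 3 := by
    rw [abs_zero, zero_mul]; positivity
  have hgain o := abs_gain_mul_le hw hC hσ.ne' (hdiag o) i j
  have hcross o₁ o₂ := abs_cross_mul_le hw hC hσ.ne' (hdiag o₁) (hdiag o₂) i j
  have hcorr o := abs_correction_mul_le hw hC hσ.ne' (hdiag o) i j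
  rw [hCpost]
  refine abs_sub_sub_add_add_mul_le (hw.nonneg i j) (hC i j) ?_ ?_ ?_ ?_
  · cases oi i; exacts [hzero₂, hgain _]
  · cases oi j; exacts [hzero₂, hgain _]
  · cases oi i <;> cases oi j; exacts [hzero₃, hzero₃, hzero₃, hcross _ _]
  · cases oi i with
    | none => exact hzero₂
    | some o₁ => cases oi j with
      | none => exact hzero₂
      | some o₂ => dsimp only; split_ifs with ho; exacts [ho ▸ hcorr o₁, hzero₂]
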